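/- arXiv:2202.13354 — 3 statements merged into one kernel-verified Lean document; each statement's English description precedes it below -/
import Mathlib

section
/- Let ABC and ÃB̃C̃ be joint distributions of triples of random variables such that A ↔ B ↔ C and Ã ↔ B̃ ↔ C̃ are Markov chains, ||AB - ÃB̃||_1 ≤ ε1, and ||BC - B̃C̃||_1 ≤ ε2. Then ||ABC - ÃB̃C̃||_1 ≤ 2ε1 + ε2. -/
open scoped BigOperators

open Finset in
lemma key_aux {X Z : Type*} [Fintype X] [Fintype Z]
    (f g : X → Z → ℝ) (hf : ∀ a c, 0 ≤ f a c) (hg : ∀ a c, 0 ≤ g a c)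
    (hfm : ∀ a c, f a c * (∑ a', ∑ c', f a' c') = (∑ c', f a c') * (∑ a', f a' c))
    (hgm : ∀ a c, g a c * (∑ a', ∑ c', g a' c') = (∑ c', g a c') * (∑ a', g a' c)) :
    ∑ a, ∑ c, |f a c - g a c|
      ≤ 2 * (∑ a, |(∑ c, f a c) - ∑ c, g a c|) + ∑ c, |(∑ a, f a c) - ∑ a, g a c| := by
  classical
  set s := ∑ a, ∑ c', f a c' with hs
  set t := ∑ a, ∑ c', g a c' with ht
  have hsn : 0 ≤ s := Finset.sum_nonneg fun a _ => Finset.sum_nonneg fun c _ => hf a c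
  have htn : 0 ≤ t := Finset.sum_nonneg fun a _ => Finset.sum_nonneg fun c _ => hg a c
  by_cases hs0 : s = 0
  · -- f ≡ 0
    have hrow : ∀ a, (∑ c', f a c') = 0 := by
      intro a
      have := (Finset.sum_eq_zero_iff_of_nonneg
        (fun a (_ : a ∈ Finset.univ) => Finset.sum_nonneg fun c _ => hf a c)).mp hs0
      exact this a (Finset.mem_univ a)
    have hf0 : ∀ a c, f a c = 0 := by
      intro a c
      have := (Finset.sum_eq_zero_iff_of_nonneg
        (fun c (_ : c ∈ Finset.univ) => hf a c)).mp (hrow a)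
      exact this c (Finset.mem_univ c)
    have L : ∑ a, ∑ c, |f a c - g a c| = t := by
      rw [ht]
      refine Finset.sum_congr rfl fun a _ => Finset.sum_congr rfl fun c _ => ?_
      rw [hf0, zero_sub, abs_neg, abs_of_nonneg (hg a c)]
    have R1 : ∑ a, |(∑ c, f a c) - ∑ c, g a c| = t := by
      rw [ht]
      refine Finset.sum_congr rfl fun a _ => ?_
      rw [hrow, zero_sub, abs_neg, abs_of_nonneg (Finset.sum_nonneg fun c _ => hg a c)]
    have R2 : 0 ≤ ∑ c, |(∑ a, f a c) - ∑ a, g a c| :=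
      Finset.sum_nonneg fun c _ => abs_nonneg _
    linarith
  by_cases ht0 : t = 0
  · -- g ≡ 0, symmetric
    have hrow : ∀ a, (∑ c', g a c') = 0 := by
      intro a
      have := (Finset.sum_eq_zero_iff_of_nonneg
        (fun a (_ : a ∈ Finset.univ) => Finset.sum_nonneg fun c _ => hg a c)).mp ht0
      exact this a (Finset.mem_univ a)
    have hg0 : ∀ a c, g a c = 0 := by
      intro a c
      have := (Finset.sum_eq_zero_iff_of_nonneg
        (fun c (_ : c ∈ Finset.univ) => hg a c)).mp (hrow a)
      exact this c (Finset.mem_univ c)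
    have L : ∑ a, ∑ c, |f a c - g a c| = s := by
      rw [hs]
      refine Finset.sum_congr rfl fun a _ => Finset.sum_congr rfl fun c _ => ?_
      rw [hg0, sub_zero, abs_of_nonneg (hf a c)]
    have R1 : ∑ a, |(∑ c, f a c) - ∑ c, g a c| = s := by
      rw [hs]
      refine Finset.sum_congr rfl fun a _ => ?_
      rw [hrow, sub_zero, abs_of_nonneg (Finset.sum_nonneg fun c _ => hf a c)]
    have R2 : 0 ≤ ∑ c, |(∑ a, f a c) - ∑ a, g a c| :=
      Finset.sum_nonneg fun c _ => abs_nonneg _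
    linarith
  -- main case
  have hsp : 0 < s := lt_of_le_of_ne hsn (Ne.symm hs0)
  have htp : 0 < t := lt_of_le_of_ne htn (Ne.symm ht0)
  set α : X → ℝ := fun a => ∑ c', f a c' with hα
  set β : Z → ℝ := fun c => ∑ a', f a' c with hβ
  set α' : X → ℝ := fun a => ∑ c', g a c' with hα'
  set β' : Z → ℝ := fun c => ∑ a', g a' c with hβ'
  have hβnn : ∀ c, 0 ≤ β c := fun c => Finset.sum_nonneg fun a _ => hf a c
  have hα'nn : ∀ a, 0 ≤ α' a := fun a => Finset.sum_nonneg fun c _ => hg a c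
  have hβs : ∑ c, β c = s := by rw [hs]; exact Finset.sum_comm
  have hα't : ∑ a, α' a = t := rfl
  have hfe : ∀ a c, f a c = α a * β c / s := by
    intro a c
    rw [eq_div_iff hs0]
    exact hfm a c
  have hge : ∀ a c, g a c = α' a * β' c / t := by
    intro a c
    rw [eq_div_iff ht0]
    exact hgm a c
  have hpt : ∀ a c, |f a c - g a c|
      ≤ |α a - α' a| * β c / s + α' a * β c * (|t - s| / (s * t))
        + α' a * (|β c - β' c| / t) := by
    intro a c
    rw [hfe, hge]
    have key : α a * β c / s - α' a * β' c / t
        = (α a - α' a) * β c / s + α' a * β c * ((t - s) / (s * t))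
          + α' a * ((β c - β' c) / t) := by
      field_simp
      ring
    rw [key]
    refine (abs_add_three _ _ _).trans ?_
    have e1 : |(α a - α' a) * β c / s| = |α a - α' a| * β c / s := by
      rw [abs_div, abs_mul, abs_of_nonneg (hβnn c), abs_of_pos hsp]
    have e2 : |α' a * β c * ((t - s) / (s * t))| = α' a * β c * (|t - s| / (s * t)) := by
      rw [abs_mul, abs_mul, abs_div, abs_of_nonneg (hα'nn a), abs_of_nonneg (hβnn c),
        abs_of_pos (mul_pos hsp htp)]
    have e3 : |α' a * ((β c - β' c) / t)| = α' a * (|β c - β' c| / t) := by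
      rw [abs_mul, abs_div, abs_of_nonneg (hα'nn a), abs_of_pos htp]
    rw [e1, e2, e3]
  have hsum : ∑ a, ∑ c, |f a c - g a c|
      ≤ ∑ a, ∑ c, (|α a - α' a| * β c / s + α' a * β c * (|t - s| / (s * t))
        + α' a * (|β c - β' c| / t)) :=
    Finset.sum_le_sum fun a _ => Finset.sum_le_sum fun c _ => hpt a c
  have hS1 : ∑ a, ∑ c, |α a - α' a| * β c / s = ∑ a, |α a - α' a| := by
    refine Finset.sum_congr rfl fun a _ => ?_
    rw [← Finset.sum_div, ← Finset.mul_sum, hβs, mul_div_assoc, div_self hs0, mul_one]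
  have hS2 : ∑ a, ∑ c, α' a * β c * (|t - s| / (s * t)) = |t - s| := by
    have : ∀ a, ∑ c, α' a * β c * (|t - s| / (s * t))
        = α' a * (s * (|t - s| / (s * t))) := by
      intro a
      rw [← Finset.sum_mul, ← Finset.mul_sum, hβs, mul_assoc]
    rw [Finset.sum_congr rfl fun a _ => this a, ← Finset.sum_mul, hα't]
    field_simp
  have hS3 : ∑ a, ∑ c, α' a * (|β c - β' c| / t) = ∑ c, |β c - β' c| := by
    rw [Finset.sum_comm]
    refine Finset.sum_congr rfl fun c _ => ?_
    rw [← Finset.sum_mul, hα't, mul_div_assoc']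
    rw [mul_comm, mul_div_assoc, div_self ht0, mul_one]
  have hts : |t - s| ≤ ∑ a, |α a - α' a| := by
    rw [← hα't, ← (by rw [hs] : ∑ a, α a = s), ← Finset.sum_sub_distrib]
    refine (Finset.abs_sum_le_sum_abs _ _).trans ?_
    refine le_of_eq (Finset.sum_congr rfl fun a _ => ?_)
    rw [abs_sub_comm]
  have hsplit : ∑ a, ∑ c, (|α a - α' a| * β c / s + α' a * β c * (|t - s| / (s * t))
        + α' a * (|β c - β' c| / t))
      = (∑ a, |α a - α' a|) + |t - s| + ∑ c, |β c - β' c| := by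
    simp only [Finset.sum_add_distrib]
    rw [hS1, hS2, hS3]
  calc ∑ a, ∑ c, |f a c - g a c|
      ≤ (∑ a, |α a - α' a|) + |t - s| + ∑ c, |β c - β' c| := by rw [← hsplit]; exact hsum
    _ ≤ 2 * (∑ a, |α a - α' a|) + ∑ c, |β c - β' c| := by linarith

/-- If `A ↔ B ↔ C` and `Ã ↔ B̃ ↔ C̃` are Markov chains, `‖AB - ÃB̃‖₁ ≤ ε₁` and
`‖BC - B̃C̃‖₁ ≤ ε₂`, then `‖ABC - ÃB̃C̃‖₁ ≤ 2ε₁ + ε₂`. The Markov-chain condition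
is expressed as `P(a,b,c)·P_B(b) = P_{AB}(a,b)·P_{BC}(b,c)`. -/
theorem stmt2 {X Y Z : Type*} [Fintype X] [Fintype Y] [Fintype Z]
    (P Q : X × Y × Z → ℝ) (ε1 ε2 : ℝ)
    (hP : ∀ p, 0 ≤ P p) (hPs : ∑ p, P p = 1)
    (hQ : ∀ p, 0 ≤ Q p) (hQs : ∑ p, Q p = 1)
    (hPmarkov : ∀ a b c, P (a, b, c) * (∑ a', ∑ c', P (a', b, c'))
        = (∑ c', P (a, b, c')) * (∑ a', P (a', b, c)))
    (hQmarkov : ∀ a b c, Q (a, b, c) * (∑ a', ∑ c', Q (a', b, c'))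
        = (∑ c', Q (a, b, c')) * (∑ a', Q (a', b, c)))
    (h1 : ∑ a, ∑ b, |(∑ c, P (a, b, c)) - ∑ c, Q (a, b, c)| ≤ ε1)
    (h2 : ∑ b, ∑ c, |(∑ a, P (a, b, c)) - ∑ a, Q (a, b, c)| ≤ ε2) :
    ∑ p, |P p - Q p| ≤ 2 * ε1 + ε2 := by
  have hL : ∑ p, |P p - Q p| = ∑ b, ∑ a, ∑ c, |P (a, b, c) - Q (a, b, c)| := by
    rw [Fintype.sum_prod_type]
    simp only [Fintype.sum_prod_type]
    exact Finset.sum_comm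
  rw [hL]
  have hb : ∀ b, ∑ a, ∑ c, |P (a, b, c) - Q (a, b, c)|
      ≤ 2 * (∑ a, |(∑ c, P (a, b, c)) - ∑ c, Q (a, b, c)|)
        + ∑ c, |(∑ a, P (a, b, c)) - ∑ a, Q (a, b, c)| := by
    intro b
    exact key_aux (fun a c => P (a, b, c)) (fun a c => Q (a, b, c))
      (fun a c => hP (a, b, c)) (fun a c => hQ (a, b, c))
      (fun a c => hPmarkov a b c) (fun a c => hQmarkov a b c)
  calc ∑ b, ∑ a, ∑ c, |P (a, b, c) - Q (a, b, c)|
      ≤ ∑ b, (2 * (∑ a, |(∑ c, P (a, b, c)) - ∑ c, Q (a, b, c)|)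
        + ∑ c, |(∑ a, P (a, b, c)) - ∑ a, Q (a, b, c)|) :=
        Finset.sum_le_sum fun b _ => hb b
    _ = 2 * (∑ b, ∑ a, |(∑ c, P (a, b, c)) - ∑ c, Q (a, b, c)|)
        + ∑ b, ∑ c, |(∑ a, P (a, b, c)) - ∑ a, Q (a, b, c)| := by
        rw [Finset.sum_add_distrib, Finset.mul_sum]
    _ ≤ 2 * ε1 + ε2 := by
        have hA : ∑ b, ∑ a, |(∑ c, P (a, b, c)) - ∑ c, Q (a, b, c)| ≤ ε1 := by
          calc ∑ b, ∑ a, |(∑ c, P (a, b, c)) - ∑ c, Q (a, b, c)|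
              = ∑ a, ∑ b, |(∑ c, P (a, b, c)) - ∑ c, Q (a, b, c)| := Finset.sum_comm
            _ ≤ ε1 := h1
        linarith
end

section
/- Let Ext : {0,1}^n × {0,1}^d → {0,1}^m be a linear strong seeded extractor with error ε (for uniform sources), i.e., for every fixed seed h the map x ↦ Ext(x,h) is F_2-linear, and ||Ext(U_n, U_d) ∘ U_d - U_m ⊗ U_d||_1 ≤ ε. Suppose XH satisfies ||XH - U_n ⊗ U_d||_1 ≤ ε', O = Ext(X,H), and Õ is a distribution with ||Õ - U_m||_1 ≤ ε''. Define the sampled joint distribution ÕH̃X̃ by: sample (õ, h̃) ← Õ ⊗ U_d, then sample x̃ uniformly from {x : Ext(x, h̃) = õ}. Then ||ÕH̃X̃ - OHX||_1 ≤ ε + ε' + ε'' and Ext(X̃, H̃) = Õ with probability 1. -/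
open scoped BigOperators

/-- Inverting a linear strong seeded extractor (Claim 4 of the paper).
`Ext` is linear in the source for every fixed seed, is a strong extractor for
uniform inputs with error `ε` (as a joint distribution with the seed), `XH` is
`ε'`-close to uniform, `O = Ext(X,H)`, and `Õ` is `ε''`-close to uniform.
Sampling `(õ,h̃) ← Õ ⊗ U_d` and then `x̃` uniformly from
`{x : Ext(x,h̃) = õ}` yields a joint distribution `ÕH̃X̃` with
`‖ÕH̃X̃ - OHX‖₁ ≤ ε + ε' + ε''`, and `Ext(X̃,H̃) = Õ` with probability 1. -/
theorem stmt6 (n d m : ℕ) (ε ε' ε'' : ℝ)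
    (Ext : (Fin n → ZMod 2) → (Fin d → ZMod 2) → (Fin m → ZMod 2))
    (hlin : ∀ h, IsLinearMap (ZMod 2) (fun x => Ext x h))
    (hne : ∀ h o, ∃ x, Ext x h = o)
    (hExt : ∑ o, ∑ h, |(∑ x, (if Ext x h = o then
        ((Fintype.card (Fin n → ZMod 2) : ℝ) * (Fintype.card (Fin d → ZMod 2) : ℝ))⁻¹ else 0))
        - ((Fintype.card (Fin m → ZMod 2) : ℝ) * (Fintype.card (Fin d → ZMod 2) : ℝ))⁻¹| ≤ ε)
    (XH : ((Fin n → ZMod 2) × (Fin d → ZMod 2)) → ℝ)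
    (hXH0 : ∀ p, 0 ≤ XH p) (hXHs : ∑ p, XH p = 1)
    (hXHclose : ∑ p, |XH p -
        ((Fintype.card (Fin n → ZMod 2) : ℝ) * (Fintype.card (Fin d → ZMod 2) : ℝ))⁻¹| ≤ ε')
    (Ot : (Fin m → ZMod 2) → ℝ)
    (hOt0 : ∀ o, 0 ≤ Ot o) (hOts : ∑ o, Ot o = 1)
    (hOtclose : ∑ o, |Ot o - (Fintype.card (Fin m → ZMod 2) : ℝ)⁻¹| ≤ ε'') :
    (∑ o, ∑ h, ∑ x,
      |(if Ext x h = o then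
          Ot o * (Fintype.card (Fin d → ZMod 2) : ℝ)⁻¹ *
            ((Finset.univ.filter (fun x' => Ext x' h = o)).card : ℝ)⁻¹ else 0)
        - (if Ext x h = o then XH (x, h) else 0)| ≤ ε + ε' + ε'')
    ∧ (∀ o h x, (if Ext x h = o then
          Ot o * (Fintype.card (Fin d → ZMod 2) : ℝ)⁻¹ *
            ((Finset.univ.filter (fun x' => Ext x' h = o)).card : ℝ)⁻¹ else 0) ≠ 0 →
        Ext x h = o) := by
  have hNpos : (0:ℝ) < (Fintype.card (Fin n → ZMod 2) : ℝ) := by exact_mod_cast Fintype.card_pos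
  have hDpos : (0:ℝ) < (Fintype.card (Fin d → ZMod 2) : ℝ) := by exact_mod_cast Fintype.card_pos
  have hMpos : (0:ℝ) < (Fintype.card (Fin m → ZMod 2) : ℝ) := by exact_mod_cast Fintype.card_pos
  set Nc := (Fintype.card (Fin n → ZMod 2) : ℝ)
  set Dc := (Fintype.card (Fin d → ZMod 2) : ℝ)
  set Mc := (Fintype.card (Fin m → ZMod 2) : ℝ)
  -- all fibers of a fixed seed have equal cardinality
  have hfib : ∀ (h : Fin d → ZMod 2) (o o' : Fin m → ZMod 2),
      (Finset.univ.filter (fun x => Ext x h = o)).card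
        = (Finset.univ.filter (fun x => Ext x h = o')).card := by
    intro h o o'
    obtain ⟨x₀, hx₀⟩ := hne h o
    obtain ⟨x₁, hx₁⟩ := hne h o'
    let F : ((Fin n → ZMod 2)) →ₗ[ZMod 2] ((Fin m → ZMod 2)) := IsLinearMap.mk' _ (hlin h)
    have hF : ∀ x, Ext x h = F x := fun x => rfl
    apply Finset.card_bij' (fun x _ => x + (x₁ - x₀)) (fun x _ => x + (x₀ - x₁))
    · intro a ha
      simp only [Finset.mem_filter, Finset.mem_univ, true_and, hF, map_add, map_sub] at ha ⊢
      rw [ha, ← hF, ← hF, hx₀, hx₁]; abel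
    · intro a ha
      simp only [Finset.mem_filter, Finset.mem_univ, true_and, hF, map_add, map_sub] at ha ⊢
      rw [ha, ← hF, ← hF, hx₀, hx₁]; abel
    · intro a _; abel
    · intro a _; abel
  -- fiber cardinality equals N / M
  have hMK : ∀ (h : Fin d → ZMod 2) (o : Fin m → ZMod 2),
      ((Finset.univ.filter (fun x => Ext x h = o)).card : ℝ) = Nc / Mc := by
    intro h o
    have hpart : ∑ o' : Fin m → ZMod 2,
        (Finset.univ.filter (fun x => Ext x h = o')).card
          = Fintype.card (Fin n → ZMod 2) := by
      rw [← Finset.card_univ]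
      exact (Finset.card_eq_sum_card_fiberwise (fun x _ => Finset.mem_univ _)).symm
    have hnat : (Fintype.card (Fin m → ZMod 2))
        * (Finset.univ.filter (fun x => Ext x h = o)).card
          = Fintype.card (Fin n → ZMod 2) := by
      rw [← hpart, Finset.sum_congr rfl (fun o' _ => hfib h o' o)]
      simp [Finset.card_univ, mul_comm]
    have hreal : Mc * ((Finset.univ.filter (fun x => Ext x h = o)).card : ℝ) = Nc := by
      show ((Fintype.card (Fin m → ZMod 2) : ℕ) : ℝ) * _ = ((Fintype.card (Fin n → ZMod 2) : ℕ) : ℝ)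
      exact_mod_cast hnat
    field_simp
    linarith [hreal]
  have hε : 0 ≤ ε := le_trans (Finset.sum_nonneg fun _ _ =>
    Finset.sum_nonneg fun _ _ => abs_nonneg _) hExt
  constructor
  · -- main bound
    have key : ∀ (o : Fin m → ZMod 2) (h : Fin d → ZMod 2) (x : Fin n → ZMod 2),
        |(if Ext x h = o then Ot o * Dc⁻¹ *
            ((Finset.univ.filter (fun x' => Ext x' h = o)).card : ℝ)⁻¹ else 0)
          - (if Ext x h = o then XH (x, h) else 0)|
        ≤ (if Ext x h = o then |Ot o - Mc⁻¹| * (Mc / (Nc * Dc)) else 0)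
          + (if Ext x h = o then |XH (x, h) - (Nc * Dc)⁻¹| else 0) := by
      intro o h x
      by_cases hc : Ext x h = o
      · simp only [if_pos hc]
        rw [hMK h o]
        have hsplit : Ot o * Dc⁻¹ * (Nc / Mc)⁻¹ - XH (x, h)
            = (Ot o - Mc⁻¹) * (Mc / (Nc * Dc)) + ((Nc * Dc)⁻¹ - XH (x, h)) := by
          field_simp
          ring
        rw [hsplit]
        calc |(Ot o - Mc⁻¹) * (Mc / (Nc * Dc)) + ((Nc * Dc)⁻¹ - XH (x, h))|
            ≤ |(Ot o - Mc⁻¹) * (Mc / (Nc * Dc))| + |(Nc * Dc)⁻¹ - XH (x, h)| := abs_add_le _ _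
          _ = |Ot o - Mc⁻¹| * (Mc / (Nc * Dc)) + |XH (x, h) - (Nc * Dc)⁻¹| := by
              rw [abs_mul, abs_of_pos (by positivity : (0:ℝ) < Mc / (Nc * Dc)), abs_sub_comm ((Nc * Dc)⁻¹) (XH (x, h))]
      · simp [hc]
    have sum1 : ∑ o : Fin m → ZMod 2, ∑ h : Fin d → ZMod 2, ∑ x : Fin n → ZMod 2,
        (if Ext x h = o then |Ot o - Mc⁻¹| * (Mc / (Nc * Dc)) else 0) ≤ ε'' := by
      have : ∀ (o : Fin m → ZMod 2) (h : Fin d → ZMod 2),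
          ∑ x : Fin n → ZMod 2, (if Ext x h = o then |Ot o - Mc⁻¹| * (Mc / (Nc * Dc)) else 0)
            = (Nc / Mc) * (|Ot o - Mc⁻¹| * (Mc / (Nc * Dc))) := by
        intro o h
        rw [← Finset.sum_filter, Finset.sum_const, nsmul_eq_mul, hMK h o]
      calc ∑ o : Fin m → ZMod 2, ∑ h : Fin d → ZMod 2, ∑ x : Fin n → ZMod 2,
            (if Ext x h = o then |Ot o - Mc⁻¹| * (Mc / (Nc * Dc)) else 0)
          = ∑ o : Fin m → ZMod 2, ∑ h : Fin d → ZMod 2,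
            (Nc / Mc) * (|Ot o - Mc⁻¹| * (Mc / (Nc * Dc))) := by
            exact Finset.sum_congr rfl fun o _ => Finset.sum_congr rfl fun h _ => this o h
        _ = ∑ o : Fin m → ZMod 2, Dc * ((Nc / Mc) * (|Ot o - Mc⁻¹| * (Mc / (Nc * Dc)))) := by
            refine Finset.sum_congr rfl fun o _ => ?_
            rw [Finset.sum_const, Finset.card_univ, nsmul_eq_mul]
        _ = ∑ o : Fin m → ZMod 2, |Ot o - Mc⁻¹| := by
            refine Finset.sum_congr rfl fun o _ => ?_
            field_simp
        _ ≤ ε'' := hOtclose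
    have sum2 : ∑ o : Fin m → ZMod 2, ∑ h : Fin d → ZMod 2, ∑ x : Fin n → ZMod 2,
        (if Ext x h = o then |XH (x, h) - (Nc * Dc)⁻¹| else 0) ≤ ε' := by
      have hsw : ∑ o : Fin m → ZMod 2, ∑ h : Fin d → ZMod 2, ∑ x : Fin n → ZMod 2,
          (if Ext x h = o then |XH (x, h) - (Nc * Dc)⁻¹| else 0)
          = ∑ h : Fin d → ZMod 2, ∑ x : Fin n → ZMod 2, ∑ o : Fin m → ZMod 2,
          (if Ext x h = o then |XH (x, h) - (Nc * Dc)⁻¹| else 0) := by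
        rw [Finset.sum_comm]
        exact Finset.sum_congr rfl fun h _ => Finset.sum_comm
      rw [hsw]
      have heval : ∀ (h : Fin d → ZMod 2) (x : Fin n → ZMod 2),
          ∑ o : Fin m → ZMod 2, (if Ext x h = o then |XH (x, h) - (Nc * Dc)⁻¹| else 0)
            = |XH (x, h) - (Nc * Dc)⁻¹| := by
        intro h x
        rw [Finset.sum_ite_eq]
        simp
      calc ∑ h : Fin d → ZMod 2, ∑ x : Fin n → ZMod 2, ∑ o : Fin m → ZMod 2,
            (if Ext x h = o then |XH (x, h) - (Nc * Dc)⁻¹| else 0)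
          = ∑ h : Fin d → ZMod 2, ∑ x : Fin n → ZMod 2, |XH (x, h) - (Nc * Dc)⁻¹| := by
            exact Finset.sum_congr rfl fun h _ => Finset.sum_congr rfl fun x _ => heval h x
        _ = ∑ p : (Fin n → ZMod 2) × (Fin d → ZMod 2), |XH p - (Nc * Dc)⁻¹| := by
            rw [Fintype.sum_prod_type, Finset.sum_comm]
        _ ≤ ε' := hXHclose
    calc ∑ o, ∑ h, ∑ x,
        |(if Ext x h = o then Ot o * Dc⁻¹ *
            ((Finset.univ.filter (fun x' => Ext x' h = o)).card : ℝ)⁻¹ else 0)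
          - (if Ext x h = o then XH (x, h) else 0)|
        ≤ ∑ o : Fin m → ZMod 2, ∑ h : Fin d → ZMod 2, ∑ x : Fin n → ZMod 2,
          ((if Ext x h = o then |Ot o - Mc⁻¹| * (Mc / (Nc * Dc)) else 0)
            + (if Ext x h = o then |XH (x, h) - (Nc * Dc)⁻¹| else 0)) := by
          refine Finset.sum_le_sum fun o _ => Finset.sum_le_sum fun h _ =>
            Finset.sum_le_sum fun x _ => key o h x
      _ = (∑ o : Fin m → ZMod 2, ∑ h : Fin d → ZMod 2, ∑ x : Fin n → ZMod 2,
            (if Ext x h = o then |Ot o - Mc⁻¹| * (Mc / (Nc * Dc)) else 0))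
          + (∑ o : Fin m → ZMod 2, ∑ h : Fin d → ZMod 2, ∑ x : Fin n → ZMod 2,
            (if Ext x h = o then |XH (x, h) - (Nc * Dc)⁻¹| else 0)) := by
          simp [Finset.sum_add_distrib]
      _ ≤ ε'' + ε' := add_le_add sum1 sum2
      _ ≤ ε + ε' + ε'' := by linarith
  · intro o h x h0
    by_contra hc
    rw [if_neg hc] at h0
    exact h0 rfl
end

section
/- Let ρ_{ABC} be a tripartite quantum state and M ∈ L(H_C) with M†M ≤ id_C. Let ρ̂_{ABC} = M ρ_{ABC} M† / Tr(M ρ_{ABC} M†). Then the conditional min-entropy satisfies H_min(A|B)_ρ̂ ≥ H_min(A|B)_ρ − log(1 / Tr(M ρ_{ABC} M†)). -/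
open scoped BigOperators Kronecker ComplexOrder Matrix

/-- The Schatten 1-norm (trace norm) of a complex matrix. -/
noncomputable def traceNorm {ι : Type*} [Fintype ι] [DecidableEq ι] (X : Matrix ι ι ℂ) : ℝ :=
  ((Matrix.posSemidef_conjTranspose_mul_self X).1.eigenvectorUnitary.1 *
    Matrix.diagonal (fun i => ((√((Matrix.posSemidef_conjTranspose_mul_self X).1.eigenvalues i) : ℝ) : ℂ)) *
    (star (Matrix.posSemidef_conjTranspose_mul_self X).1.eigenvectorUnitary : Matrix ι ι ℂ)).trace.re

/-- Positive-semidefinite square root (junk value `0` off the PSD cone). -/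
noncomputable def psqrt {ι : Type*} [Fintype ι] [DecidableEq ι] (X : Matrix ι ι ℂ) :
    Matrix ι ι ℂ :=
  open scoped Classical in
  if h : X.PosSemidef then h.1.eigenvectorUnitary.1 *
    Matrix.diagonal (fun i => ((√(h.1.eigenvalues i) : ℝ) : ℂ)) *
    (star h.1.eigenvectorUnitary : Matrix ι ι ℂ) else 0

/-- Max-divergence `D_max(ρ‖σ) = inf {λ : ρ ≤ 2^λ σ}`. -/
noncomputable def dMax {ι : Type*} [Fintype ι] (ρ σ : Matrix ι ι ℂ) : ℝ :=
  sInf {l : ℝ | (((2:ℝ) ^ l) • σ - ρ).PosSemidef}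

/-- Conditional min-entropy `H_min(A|B)_ρ = sup {r | ∃ state σ_B, ρ ≤ 2^{-r}(id_A ⊗ σ_B)}`. -/
noncomputable def condHmin {A B : Type*} [Fintype A] [Fintype B] [DecidableEq A] [DecidableEq B]
    (ρ : Matrix (A × B) (A × B) ℂ) : ℝ :=
  sSup {r : ℝ | ∃ σ : Matrix B B ℂ, σ.PosSemidef ∧ σ.trace = 1 ∧
    (((2:ℝ) ^ (-r)) • ((1 : Matrix A A ℂ) ⊗ₖ σ) - ρ).PosSemidef}

/-- Partial trace over the second tensor factor. -/
noncomputable def ptraceRight {A B : Type*} [Fintype B] (ρ : Matrix (A × B) (A × B) ℂ) :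
    Matrix A A ℂ := Matrix.of fun a a' => ∑ b, ρ (a, b) (a', b)

/-- The maximally mixed state on `ι`. -/
noncomputable def mmix (ι : Type*) [Fintype ι] [DecidableEq ι] : Matrix ι ι ℂ :=
  (Fintype.card ι : ℂ)⁻¹ • 1

/-!
Write `W = √(1 - M†M)`. Since the partial trace over `C` is cyclic in operators acting on `C`
alone, `ρ_AB` splits as the `AB`-marginal of `(1 ⊗ M) ρ (1 ⊗ M)†`, which is `τ ρ̂_AB`, plus the
`AB`-marginal of the positive operator `(1 ⊗ W) ρ (1 ⊗ W)†`. Hence `τ ρ̂_AB ≤ ρ_AB`, so every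
`σ_B` witnessing `ρ_AB ≤ 2^{-r} (id_A ⊗ σ_B)` also witnesses
`ρ̂_AB ≤ 2^{-(r + log τ)} (id_A ⊗ σ_B)`, and the bound follows on taking suprema.
-/

open scoped MatrixOrder

namespace Matrix

section PartialTrace

variable {D C : Type*} [Fintype C]

lemma ptraceRight_eq_sum_submatrix (ρ : Matrix (D × C) (D × C) ℂ) :
    ptraceRight ρ = ∑ c, ρ.submatrix (·, c) (·, c) := by
  ext d d'
  simp [ptraceRight, Matrix.sum_apply]

lemma PosSemidef.ptraceRight {ρ : Matrix (D × C) (D × C) ℂ} (hρ : ρ.PosSemidef) :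
    (ptraceRight ρ).PosSemidef := by
  rw [ptraceRight_eq_sum_submatrix]
  exact posSemidef_sum _ fun c _ => hρ.submatrix _

lemma trace_ptraceRight [Fintype D] (ρ : Matrix (D × C) (D × C) ℂ) :
    (ptraceRight ρ).trace = ρ.trace := by
  simp [ptraceRight, Matrix.trace, Fintype.sum_prod_type]

lemma ptraceRight_add (ρ ρ' : Matrix (D × C) (D × C) ℂ) :
    ptraceRight (ρ + ρ') = ptraceRight ρ + ptraceRight ρ' := by
  ext d d'
  simp [ptraceRight, Finset.sum_add_distrib]

lemma ptraceRight_smul (z : ℂ) (ρ : Matrix (D × C) (D × C) ℂ) :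
    ptraceRight (z • ρ) = z • ptraceRight ρ := by
  ext d d'
  simp [ptraceRight, Finset.mul_sum]

variable [Fintype D] [DecidableEq D]

lemma ptraceRight_one_kronecker_mul_mul (ρ : Matrix (D × C) (D × C) ℂ) (P Q : Matrix C C ℂ) :
    ptraceRight (((1 : Matrix D D ℂ) ⊗ₖ P) * ρ * ((1 : Matrix D D ℂ) ⊗ₖ Q)) =
      ptraceRight (ρ * ((1 : Matrix D D ℂ) ⊗ₖ (Q * P))) := by
  ext d d'
  simp only [ptraceRight, of_apply, mul_apply, kroneckerMap_apply, one_apply,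
    Fintype.sum_prod_type, mul_ite, ite_mul, one_mul, zero_mul, mul_zero,
    Finset.sum_ite_irrel, Finset.sum_const_zero, Finset.sum_ite_eq, Finset.sum_ite_eq',
    Finset.mem_univ, if_true, Finset.sum_mul, Finset.mul_sum]
  rw [Finset.sum_comm]
  conv_rhs => rw [Finset.sum_comm]
  refine Finset.sum_congr rfl fun c₂ _ => ?_
  rw [Finset.sum_comm]
  exact Finset.sum_congr rfl fun c₁ _ => Finset.sum_congr rfl fun c _ => by ring

theorem ptraceRight_conj_one_kronecker_le [DecidableEq C] {ρ : Matrix (D × C) (D × C) ℂ}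
    (hρ : ρ.PosSemidef) {M : Matrix C C ℂ} (hM : (1 - Mᴴ * M).PosSemidef) :
    ptraceRight (((1 : Matrix D D ℂ) ⊗ₖ M) * ρ * ((1 : Matrix D D ℂ) ⊗ₖ M)ᴴ) ≤
      ptraceRight ρ := by
  set W := CFC.sqrt (1 - Mᴴ * M)
  have hW : Wᴴ = W := (CFC.sqrt_nonneg (1 - Mᴴ * M)).isSelfAdjoint
  have hMW : Mᴴ * M + W * W = 1 := by
    rw [CFC.sqrt_mul_sqrt_self _ hM.nonneg, add_sub_cancel]
  have hsplit : ptraceRight ρ =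
      ptraceRight (((1 : Matrix D D ℂ) ⊗ₖ M) * ρ * ((1 : Matrix D D ℂ) ⊗ₖ M)ᴴ) +
      ptraceRight (((1 : Matrix D D ℂ) ⊗ₖ W) * ρ * ((1 : Matrix D D ℂ) ⊗ₖ W)ᴴ) := by
    rw [conjTranspose_kronecker, conjTranspose_kronecker, conjTranspose_one, hW,
      ptraceRight_one_kronecker_mul_mul, ptraceRight_one_kronecker_mul_mul, ← ptraceRight_add,
      ← mul_add, ← kronecker_add, hMW, one_kronecker_one, mul_one]
  rw [hsplit]
  exact le_add_of_nonneg_right (hρ.mul_mul_conjTranspose_same _).ptraceRight.nonneg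

end PartialTrace

lemma nonempty_of_trace_ne_zero {n R : Type*} [Fintype n] [AddCommMonoid R] {T : Matrix n n R}
    (h : T.trace ≠ 0) : Nonempty n := by
  by_contra hn
  rw [not_nonempty_iff] at hn
  exact h (by simp [trace])

lemma PosSemidef.le_trace_re_smul_one {n : Type*} [Fintype n] [DecidableEq n] {T : Matrix n n ℂ}
    (hT : T.PosSemidef) : T ≤ T.trace.re • (1 : Matrix n n ℂ) := by
  rw [← Algebra.algebraMap_eq_smul_one]
  refine le_algebraMap_of_spectrum_le (fun x hx => ?_) hT.1
  rw [hT.1.spectrum_real_eq_range_eigenvalues] at hx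
  obtain ⟨i, rfl⟩ := hx
  rw [hT.1.trace_eq_sum_eigenvalues, Complex.re_sum]
  exact Finset.single_le_sum (fun j _ => hT.eigenvalues_nonneg j) (Finset.mem_univ i)

end Matrix

open Matrix

section MinEntropy

variable {A B : Type*} [Fintype A] [Fintype B] [DecidableEq A]

def condHminSet (T : Matrix (A × B) (A × B) ℂ) : Set ℝ :=
  {r | ∃ σ : Matrix B B ℂ, σ.PosSemidef ∧ σ.trace = 1 ∧
    T ≤ (2 : ℝ) ^ (-r) • ((1 : Matrix A A ℂ) ⊗ₖ σ)}

lemma condHmin_eq_sSup [DecidableEq B] (T : Matrix (A × B) (A × B) ℂ) :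
    condHmin T = sSup (condHminSet T) := rfl

lemma neg_logb_card_mem_condHminSet [DecidableEq B] {T : Matrix (A × B) (A × B) ℂ}
    (hT : T.PosSemidef) (hT1 : T.trace = 1) : -Real.logb 2 (Fintype.card B) ∈ condHminSet T := by
  have := (nonempty_of_trace_ne_zero (hT1 ▸ one_ne_zero)).map Prod.snd
  have hB : (Fintype.card B : ℝ) ≠ 0 := Nat.cast_ne_zero.2 Fintype.card_ne_zero
  refine ⟨mmix B, PosSemidef.one.smul (inv_nonneg.2 (Nat.cast_nonneg _)), ?_, ?_⟩
  · rw [mmix, trace_smul, trace_one, smul_eq_mul, inv_mul_cancel₀ (mod_cast hB)]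
  · have hmix :
        (2 : ℝ) ^ (-(-Real.logb 2 (Fintype.card B))) • ((1 : Matrix A A ℂ) ⊗ₖ mmix B) = 1 := by
      rw [neg_neg, Real.rpow_logb two_pos (by norm_num) (by positivity), mmix, kronecker_smul,
        one_kronecker_one, RCLike.real_smul_eq_coe_smul (K := ℂ), smul_smul]
      simp
    have := hT.le_trace_re_smul_one
    rwa [hT1, Complex.one_re, one_smul, ← hmix] at this

lemma le_logb_card_of_mem_condHminSet {T : Matrix (A × B) (A × B) ℂ} (hT1 : T.trace = 1) {r : ℝ}
    (hr : r ∈ condHminSet T) : r ≤ Real.logb 2 (Fintype.card A) := by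
  obtain ⟨σ, -, hσ1, hTσ⟩ := hr
  have := (nonempty_of_trace_ne_zero (hT1 ▸ one_ne_zero)).map Prod.fst
  have htr := (le_iff.1 hTσ).trace_nonneg
  rw [trace_sub, trace_smul, trace_kronecker, trace_one, hσ1, hT1, mul_one, sub_nonneg,
    Complex.real_smul] at htr
  rw [← Complex.ofReal_natCast, ← Complex.ofReal_mul, ← Complex.ofReal_one, Complex.real_le_real,
    Real.rpow_neg two_pos.le] at htr
  rw [Real.le_logb_iff_rpow_le one_lt_two (by positivity)]
  exact (one_le_inv_mul₀ (by positivity)).1 htr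

lemma bddAbove_condHminSet {T : Matrix (A × B) (A × B) ℂ} (hT1 : T.trace = 1) :
    BddAbove (condHminSet T) :=
  ⟨_, fun _ => le_logb_card_of_mem_condHminSet hT1⟩

lemma add_logb_mem_condHminSet {T T' : Matrix (A × B) (A × B) ℂ} {τ : ℝ} (hτ : 0 < τ)
    (hle : τ • T' ≤ T) {r : ℝ} (hr : r ∈ condHminSet T) : r + Real.logb 2 τ ∈ condHminSet T' := by
  obtain ⟨σ, hσ, hσ1, hTσ⟩ := hr
  refine ⟨σ, hσ, hσ1, ?_⟩
  have hpow : (2 : ℝ) ^ (-(r + Real.logb 2 τ)) = τ⁻¹ * 2 ^ (-r) := by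
    rw [neg_add, Real.rpow_add two_pos, Real.rpow_neg two_pos.le (Real.logb 2 τ),
      Real.rpow_logb two_pos (by norm_num) hτ, mul_comm]
  calc T' = τ⁻¹ • τ • T' := (inv_smul_smul₀ hτ.ne' _).symm
    _ ≤ τ⁻¹ • T := smul_le_smul_of_nonneg_left hle (inv_nonneg.2 hτ.le)
    _ ≤ τ⁻¹ • (2 : ℝ) ^ (-r) • ((1 : Matrix A A ℂ) ⊗ₖ σ) :=
      smul_le_smul_of_nonneg_left hTσ (inv_nonneg.2 hτ.le)
    _ = _ := by rw [hpow, mul_smul]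

theorem condHmin_add_logb_le_of_smul_le [DecidableEq B] {T T' : Matrix (A × B) (A × B) ℂ}
    (hT : T.PosSemidef) (hT1 : T.trace = 1) (hT'1 : T'.trace = 1) {τ : ℝ} (hτ : 0 < τ)
    (hle : τ • T' ≤ T) :
    condHmin T + Real.logb 2 τ ≤ condHmin T' := by
  rw [condHmin_eq_sSup, condHmin_eq_sSup, ← le_sub_iff_add_le]
  refine csSup_le ⟨_, neg_logb_card_mem_condHminSet hT hT1⟩ fun r hr => le_sub_iff_add_le.2 ?_
  exact le_csSup (bddAbove_condHminSet hT'1) (add_logb_mem_condHminSet hτ hle hr)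

end MinEntropy

/-- Min-entropy decrease under a measurement operator on a third register
(Fact 13 / `fact:minentropydecrease`): for a tripartite state `ρ_{ABC}` and
`M` with `M†M ≤ 1` acting on `C`, the renormalised post-measurement state
`ρ̂ = MρM†/Tr(MρM†)` satisfies
`H_min(A|B)_ρ̂ ≥ H_min(A|B)_ρ − log(1/Tr(MρM†))`. -/
theorem stmt10 {A B C : Type} [Fintype A] [DecidableEq A] [Fintype B] [DecidableEq B]
    [Fintype C] [DecidableEq C]
    (ρ : Matrix ((A × B) × C) ((A × B) × C) ℂ)
    (hρ : ρ.PosSemidef) (hρ1 : ρ.trace = 1)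
    (M : Matrix C C ℂ) (hM : ((1 : Matrix C C ℂ) - Mᴴ * M).PosSemidef)
    (τ : ℝ) (hτ : 0 < τ)
    (hτeq : ((((1 : Matrix (A × B) (A × B) ℂ) ⊗ₖ M) * ρ *
        ((1 : Matrix (A × B) (A × B) ℂ) ⊗ₖ M)ᴴ).trace = (τ : ℂ))) :
    condHmin (ptraceRight ρ) - Real.logb 2 (1 / τ) ≤
      condHmin (ptraceRight ((τ : ℂ)⁻¹ •
        (((1 : Matrix (A × B) (A × B) ℂ) ⊗ₖ M) * ρ *
          ((1 : Matrix (A × B) (A × B) ℂ) ⊗ₖ M)ᴴ))) := by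
  set X := ((1 : Matrix (A × B) (A × B) ℂ) ⊗ₖ M) * ρ *
    ((1 : Matrix (A × B) (A × B) ℂ) ⊗ₖ M)ᴴ
  have hτ₀ : (τ : ℂ) ≠ 0 := Complex.ofReal_ne_zero.2 hτ.ne'
  have htrρ : (ptraceRight ρ).trace = 1 := by rw [trace_ptraceRight, hρ1]
  have htrρ' : (ptraceRight ((τ : ℂ)⁻¹ • X)).trace = 1 := by
    rw [trace_ptraceRight, trace_smul, hτeq, smul_eq_mul, inv_mul_cancel₀ hτ₀]
  have hrescale : τ • ptraceRight ((τ : ℂ)⁻¹ • X) = ptraceRight X := by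
    rw [RCLike.real_smul_eq_coe_smul (K := ℂ), ptraceRight_smul, smul_smul]
    simp [hτ₀]
  rw [one_div, Real.logb_inv, sub_neg_eq_add]
  exact condHmin_add_logb_le_of_smul_le hρ.ptraceRight htrρ htrρ' hτ
    (hrescale ▸ ptraceRight_conj_one_kronecker_le hρ hM)
end
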